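/- For a closed subset H of a Tychonoff space X, H is hard in X if and only if there exists a compact subset K of H such that for every open neighbourhood V of K there exist a zero set Z1 and a zero set Z2 with X \ Z2 realcompact such that H \ V ⊆ Z1 ⊆ X \ Z2. -/

import Mathlib

open Set Topology

variable {X : Type*}

def IsZeroSet [TopologicalSpace X] (Z : Set X) : Prop :=
  ∃ f : X → ℝ, Continuous f ∧ Z = {x | f x = 0}

def IsZFilter [TopologicalSpace X] (F : Set (Set X)) : Prop :=
  (∀ Z ∈ F, IsZeroSet Z) ∧ (∅ : Set X) ∉ F ∧ Set.univ ∈ F ∧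
  (∀ Z₁ ∈ F, ∀ Z₂ ∈ F, Z₁ ∩ Z₂ ∈ F) ∧
  (∀ Z₁ ∈ F, ∀ Z₂ : Set X, IsZeroSet Z₂ → Z₁ ⊆ Z₂ → Z₂ ∈ F)

def IsZUltrafilter [TopologicalSpace X] (F : Set (Set X)) : Prop :=
  IsZFilter F ∧ ∀ G : Set (Set X), IsZFilter G → F ⊆ G → G = F

def IsPrimeZFilter [TopologicalSpace X] (F : Set (Set X)) : Prop :=
  IsZFilter F ∧ ∀ Z₁ Z₂ : Set X, IsZeroSet Z₁ → IsZeroSet Z₂ → Z₁ ∪ Z₂ ∈ F →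
    Z₁ ∈ F ∨ Z₂ ∈ F

def HasCIP (F : Set (Set X)) : Prop :=
  ∀ s : ℕ → Set X, (∀ n, s n ∈ F) → (⋂ n, s n).Nonempty

def IsFixedFamily (F : Set (Set X)) : Prop := (⋂₀ F).Nonempty

def IsRealcompact (Y : Type*) [TopologicalSpace Y] : Prop :=
  ∀ F : Set (Set Y), IsZUltrafilter F → HasCIP F → IsFixedFamily F

def CompletelySeparated [TopologicalSpace X] (A B : Set X) : Prop :=
  ∃ f : X → ℝ, Continuous f ∧ (∀ x ∈ A, f x = 0) ∧ (∀ x ∈ B, f x = 1)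

def IsHard [TopologicalSpace X] (H : Set X) : Prop :=
  IsClosed H ∧ ∃ K : Set X, IsCompact K ∧ ∀ V : Set X, IsOpen V → K ⊆ V →
    ∃ P : Set X, IsRealcompact ↥P ∧ CompletelySeparated (H \ V) Pᶜ

def IsPseudocompact (Y : Type*) [TopologicalSpace Y] : Prop :=
  ∀ f : Y → ℝ, Continuous f → ∃ M : ℝ, ∀ y, |f y| ≤ M

def NearlyPseudocompact (Y : Type*) [TopologicalSpace Y] : Prop :=
  ∃ X₁ X₂ : Set Y, X₁ ∪ X₂ = Set.univ ∧
    X₁ = closure (interior X₁) ∧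
    X₁ = closure {y : Y | ∃ K : Set Y, IsCompact K ∧ K ∈ nhds y} ∧
    IsPseudocompact ↥X₁ ∧
    X₂ = closure (interior X₂) ∧
    (∀ y ∈ X₂, ¬ ∃ N ∈ nhds y, IsRealcompact ↥N) ∧
    interior (X₁ ∩ X₂) = (∅ : Set Y)

def IsHZFilter [TopologicalSpace X] (F : Set (Set X)) : Prop :=
  IsZFilter F ∧ ∀ Z ∈ F, ∃ H ∈ F, IsHard H ∧ H ⊆ Z

def IsHZUltrafilter [TopologicalSpace X] (F : Set (Set X)) : Prop :=
  IsZUltrafilter F ∧ ∃ H ∈ F, IsHard H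

def deltaX (X : Type*) [TopologicalSpace X] : Type _ :=
  {F : Set (Set X) // IsZUltrafilter F ∧ (IsFixedFamily F ∨ ∃ H ∈ F, IsHard H)}

def deltaCl [TopologicalSpace X] (Z : Set X) : Set (deltaX X) :=
  {p | Z ∈ p.1}

instance [TopologicalSpace X] : TopologicalSpace (deltaX X) :=
  TopologicalSpace.generateFrom {U | ∃ Z : Set X, IsZeroSet Z ∧ U = (deltaCl Z)ᶜ}

def pointUltra [TopologicalSpace X] (x : X) : Set (Set X) :=
  {Z | IsZeroSet Z ∧ x ∈ Z}

section Lemmas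
variable [TopologicalSpace X]

lemma isZeroSet_univ : IsZeroSet (univ : Set X) :=
  ⟨fun _ => 0, continuous_const, by ext x; simp⟩

lemma IsZeroSet.inter {Z₁ Z₂ : Set X} (h₁ : IsZeroSet Z₁) (h₂ : IsZeroSet Z₂) :
    IsZeroSet (Z₁ ∩ Z₂) := by
  obtain ⟨f, hf, rfl⟩ := h₁
  obtain ⟨g, hg, rfl⟩ := h₂
  refine ⟨fun x => |f x| + |g x|, (hf.abs.add hg.abs), ?_⟩
  ext x
  constructor
  · rintro ⟨h1, h2⟩
    simp only [mem_setOf_eq] at *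
    simp [h1, h2]
  · intro hx
    simp only [mem_setOf_eq] at hx
    have h1 : |f x| = 0 := le_antisymm (by nlinarith [abs_nonneg (f x), abs_nonneg (g x)]) (abs_nonneg _)
    have h2 : |g x| = 0 := le_antisymm (by nlinarith [abs_nonneg (f x), abs_nonneg (g x)]) (abs_nonneg _)
    exact ⟨abs_eq_zero.mp h1, abs_eq_zero.mp h2⟩

lemma IsZeroSet.preimage {Y : Type*} [TopologicalSpace Y] {Z : Set Y} (hZ : IsZeroSet Z)
    {e : X → Y} (he : Continuous e) : IsZeroSet (e ⁻¹' Z) := by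
  obtain ⟨f, hf, rfl⟩ := hZ
  exact ⟨f ∘ e, hf.comp he, rfl⟩

lemma isZeroSet_le {φ : X → ℝ} (hφ : Continuous φ) (c : ℝ) :
    IsZeroSet {x | φ x ≤ c} := by
  refine ⟨fun x => max (φ x - c) 0, (hφ.sub continuous_const).max continuous_const, ?_⟩
  ext x
  simp [max_eq_right_iff, sub_nonpos]

lemma isZeroSet_ge {φ : X → ℝ} (hφ : Continuous φ) (c : ℝ) :
    IsZeroSet {x | c ≤ φ x} := by
  refine ⟨fun x => max (c - φ x) 0, (continuous_const.sub hφ).max continuous_const, ?_⟩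
  ext x
  simp [max_eq_right_iff, sub_nonpos]

lemma meets_mem {F : Set (Set X)} (hF : IsZUltrafilter F) {Z : Set X} (hZ : IsZeroSet Z)
    (hm : ∀ W ∈ F, (Z ∩ W).Nonempty) : Z ∈ F := by
  set G : Set (Set X) := {Z' | IsZeroSet Z' ∧ ∃ W ∈ F, Z ∩ W ⊆ Z'} with hGdef
  have hGF : IsZFilter G := by
    refine ⟨fun Z' hZ' => hZ'.1, ?_, ⟨isZeroSet_univ, univ, hF.1.2.2.1, subset_univ _⟩, ?_, ?_⟩
    · rintro ⟨-, W, hW, hsub⟩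
      exact (hm W hW).ne_empty (subset_empty_iff.mp hsub)
    · rintro Z₁ ⟨hz₁, W₁, hW₁, hs₁⟩ Z₂ ⟨hz₂, W₂, hW₂, hs₂⟩
      exact ⟨hz₁.inter hz₂, W₁ ∩ W₂, hF.1.2.2.2.1 W₁ hW₁ W₂ hW₂,
        fun x hx => ⟨hs₁ ⟨hx.1, hx.2.1⟩, hs₂ ⟨hx.1, hx.2.2⟩⟩⟩
    · rintro Z₁ ⟨hz₁, W₁, hW₁, hs₁⟩ Z₂ hz₂ hsub
      exact ⟨hz₂, W₁, hW₁, hs₁.trans hsub⟩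
  have hsub : F ⊆ G := fun W hW => ⟨hF.1.1 W hW, W, hW, inter_subset_right⟩
  have := hF.2 G hGF hsub
  rw [← this]
  exact ⟨hZ, univ, hF.1.2.2.1, fun x hx => hx.1⟩

lemma ultra_of_meets {F : Set (Set X)} (hF : IsZFilter F)
    (hm : ∀ Z : Set X, IsZeroSet Z → (∀ W ∈ F, (Z ∩ W).Nonempty) → Z ∈ F) :
    IsZUltrafilter F := by
  refine ⟨hF, fun G hG hFG => Subset.antisymm ?_ hFG⟩
  intro Z hZG
  refine hm Z (hG.1 Z hZG) fun W hWF => ?_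
  have : Z ∩ W ∈ G := hG.2.2.2.1 Z hZG W (hFG hWF)
  rw [nonempty_iff_ne_empty]
  intro he
  rw [he] at this
  exact hG.2.1 this

lemma prime_of_ultra {F : Set (Set X)} (hF : IsZUltrafilter F) {Z₁ Z₂ : Set X}
    (h₁ : IsZeroSet Z₁) (h₂ : IsZeroSet Z₂) (hu : Z₁ ∪ Z₂ ∈ F) : Z₁ ∈ F ∨ Z₂ ∈ F := by
  by_cases hZ₁ : Z₁ ∈ F
  · exact Or.inl hZ₁
  right
  have : ∃ W ∈ F, Z₁ ∩ W = ∅ := by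
    by_contra hc
    push_neg at hc
    exact hZ₁ (meets_mem hF h₁ fun W hW => hc W hW)
  obtain ⟨W, hW, hWe⟩ := this
  have hmem : W ∩ (Z₁ ∪ Z₂) ∈ F := hF.1.2.2.2.1 W hW _ hu
  refine hF.1.2.2.2.2 _ hmem Z₂ h₂ fun x hx => ?_
  rcases hx.2 with h | h
  · exact absurd (mem_inter h hx.1) (by rw [hWe]; exact notMem_empty x)
  · exact h
end Lemmas

lemma cozero_realcompact [TopologicalSpace X] {P C : Set X} (hCP : C ⊆ P)
    (hP : IsRealcompact ↥P) {h : X → ℝ} (hh : Continuous h)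
    (hC : C = {x | h x ≠ 0}) : IsRealcompact ↥C := by
  classical
  intro F hF hCIP
  have hhv : Continuous fun y : ↥C => h y.1 := hh.comp continuous_subtype_val
  -- Step 1 : some A_ε ∈ F
  have step1 : ∃ ε : ℝ, 0 < ε ∧ {y : ↥C | ε ≤ |h y.1|} ∈ F := by
    by_contra hcon
    push_neg at hcon
    have hB : ∀ n : ℕ, {y : ↥C | |h y.1| ≤ 1 / (n + 1)} ∈ F := by
      intro n
      have hpos : (0 : ℝ) < 1 / (n + 1) := by positivity
      have hunion : {y : ↥C | 1 / (n + 1 : ℝ) ≤ |h y.1|} ∪ {y : ↥C | |h y.1| ≤ 1 / (n + 1)}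
          ∈ F := by
        have : {y : ↥C | 1 / (n + 1 : ℝ) ≤ |h y.1|} ∪ {y : ↥C | |h y.1| ≤ 1 / (n + 1)} = univ := by
          ext y; simp only [mem_union, mem_setOf_eq, mem_univ, iff_true]
          exact le_total (1 / (n + 1 : ℝ)) |h y.1| |>.imp id id
        rw [this]; exact hF.1.2.2.1
      rcases prime_of_ultra hF (isZeroSet_ge hhv.abs _) (isZeroSet_le hhv.abs _) hunion with
        hA | hB
      · exact absurd hA (hcon _ hpos)
      · exact hB
    obtain ⟨y, hy⟩ := hCIP _ hB
    simp only [mem_iInter, mem_setOf_eq] at hy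
    have : |h y.1| ≤ 0 := by
      by_contra hlt
      push_neg at hlt
      obtain ⟨n, hn⟩ := exists_nat_one_div_lt hlt
      exact absurd (hy n) (not_le.mpr hn)
    have : h y.1 = 0 := abs_eq_zero.mp (le_antisymm this (abs_nonneg _))

    exact ((Set.ext_iff.mp hC y.1).mp y.2) this
  obtain ⟨ε, hε, hAF⟩ := step1
  set A : Set ↥C := {y : ↥C | ε ≤ |h y.1|} with hAdef
  have hAzero : IsZeroSet A := isZeroSet_ge hhv.abs ε
  set e : ↥C → ↥P := fun y => ⟨y.1, hCP y.2⟩ with hedef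
  have he : Continuous e := Continuous.subtype_mk continuous_subtype_val _
  have hCopen : IsOpen C := by
    rw [hC]
    exact isOpen_ne.preimage hh
  -- Extension lemma
  have ext_lemma : ∀ W ∈ F, W ⊆ A → ∃ Z' : Set ↥P, IsZeroSet Z' ∧ e ⁻¹' Z' = W ∧
      ∀ p ∈ Z', ε ≤ |h p.1| := by
    intro W hWF hWA
    obtain ⟨u, hu, hWu⟩ := hF.1.1 W hWF
    set θ : X → ℝ := fun x => max 0 (min 1 ((2 / ε) * (|h x| - ε / 2))) with hθdef
    have hθc : Continuous θ := by fun_prop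
    have hθ1 : ∀ x, ε ≤ |h x| → θ x = 1 := by
      intro x hx
      have h1 : (1 : ℝ) ≤ (2 / ε) * (|h x| - ε / 2) := by
        have h2 : 2 / ε * (ε / 2) = 1 := by field_simp
        have h4 : 0 < 2 / ε := by positivity
        nlinarith
      simp only [hθdef]
      rw [min_eq_left h1, max_eq_right zero_le_one]
    have hθ0 : ∀ x, |h x| ≤ ε / 2 → θ x = 0 := by
      intro x hx
      have h1 : (2 / ε) * (|h x| - ε / 2) ≤ 0 := by
        apply mul_nonpos_of_nonneg_of_nonpos (by positivity) (by linarith)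
      simp only [hθdef]
      rw [max_eq_left ((min_le_right _ _).trans h1)]
    set g : X → ℝ := fun x => if hx : x ∈ C then |u ⟨x, hx⟩| * θ x else 0 with hgdef
    have hgC : ∀ (x : X) (hx : x ∈ C), g x = |u ⟨x, hx⟩| * θ x := fun x hx => dif_pos hx
    have hgc : Continuous g := by
      rw [continuous_iff_continuousAt]
      intro x
      by_cases hx : x ∈ C
      · have hCO : ContinuousOn g C := by
          rw [continuousOn_iff_continuous_restrict]
          have : C.restrict g = fun y : ↥C => |u y| * θ y.1 := by
            funext y
            simp only [restrict, hgdef]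
            exact dif_pos y.2
          rw [show C.domRestrict g = C.restrict g from rfl, this]
          exact hu.abs.mul (hθc.comp continuous_subtype_val)
        exact hCO.continuousAt (hCopen.mem_nhds hx)
      · have hx0 : h x = 0 := by
          by_contra h0
          exact hx (hC ▸ h0)
        have hU : ∀ᶠ z in nhds x, g z = 0 := by
          have hmem : {z | |h z| < ε / 2} ∈ nhds x := by
            apply (isOpen_lt hh.abs continuous_const).mem_nhds
            have hpos2 : (0:ℝ) < ε / 2 := by positivity
            simp [hx0, hpos2]
          filter_upwards [hmem] with z hz
          by_cases hzC : z ∈ C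
          · rw [hgC z hzC, hθ0 z hz.le, mul_zero]
          · simp only [hgdef]; rw [dif_neg hzC]
        have h0 : ContinuousAt (fun _ : X => (0:ℝ)) x := continuousAt_const
        exact (continuousAt_congr hU).mpr h0
    refine ⟨{p : ↥P | g p.1 = 0} ∩ {p : ↥P | ε ≤ |h p.1|}, ?_, ?_, fun p hp => hp.2⟩
    · exact IsZeroSet.inter
        ⟨fun p => g p.1, hgc.comp continuous_subtype_val, rfl⟩
        (isZeroSet_ge ((hh.comp continuous_subtype_val).abs) ε)
    · ext y
      simp only [mem_preimage, mem_inter_iff, mem_setOf_eq, hedef]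
      constructor
      · rintro ⟨hg0, hεy⟩
        rw [hgC y.1 y.2] at hg0
        rw [hθ1 y.1 hεy, mul_one] at hg0
        have : u ⟨y.1, y.2⟩ = 0 := abs_eq_zero.mp hg0
        rw [hWu]
        simpa using this
      · intro hyW
        refine ⟨?_, hWA hyW⟩
        rw [hgC y.1 y.2]
        have : u ⟨y.1, y.2⟩ = 0 := by
          rw [hWu] at hyW
          simpa using hyW
        rw [this]
        simp
  -- the pushed filter
  set G : Set (Set ↥P) := {Z' | IsZeroSet Z' ∧ e ⁻¹' Z' ∈ F} with hGdef
  have hGfilter : IsZFilter G := by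
    refine ⟨fun Z hZ => hZ.1, ?_, ⟨isZeroSet_univ, by simpa using hF.1.2.2.1⟩, ?_, ?_⟩
    · rintro ⟨-, hpre⟩
      rw [preimage_empty] at hpre
      exact hF.1.2.1 hpre
    · rintro Z₁ ⟨hz₁, hp₁⟩ Z₂ ⟨hz₂, hp₂⟩
      exact ⟨hz₁.inter hz₂, by rw [preimage_inter]; exact hF.1.2.2.2.1 _ hp₁ _ hp₂⟩
    · rintro Z₁ ⟨hz₁, hp₁⟩ Z₂ hz₂ hsub
      exact ⟨hz₂, hF.1.2.2.2.2 _ hp₁ _ (hz₂.preimage he) (preimage_mono hsub)⟩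
  have key : ∀ W ∈ F, W ⊆ A → ∃ Z' ∈ G, e ⁻¹' Z' = W ∧ ∀ p ∈ Z', (p:X) ∈ C := by
    intro W hWF hWA
    obtain ⟨Z', hz', hpre, hbig⟩ := ext_lemma W hWF hWA
    refine ⟨Z', ⟨hz', by rw [hpre]; exact hWF⟩, hpre, fun p hp => ?_⟩
    rw [hC]
    intro h0
    have := hbig p hp
    rw [h0] at this
    simp at this
    linarith
  have hGultra : IsZUltrafilter G := by
    apply ultra_of_meets hGfilter
    intro Z' hz' hmeets
    refine ⟨hz', meets_mem hF (hz'.preimage he) fun W hWF => ?_⟩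
    obtain ⟨Z'', hZ''G, hpre, hmemC⟩ := key (W ∩ A) (hF.1.2.2.2.1 _ hWF _ hAF)
      inter_subset_right
    obtain ⟨p, hpZ', hpZ''⟩ := hmeets Z'' hZ''G
    have hpC : (p : X) ∈ C := hmemC p hpZ''
    refine ⟨⟨p.1, hpC⟩, ?_, ?_⟩
    · show e ⟨p.1, hpC⟩ ∈ Z'
      have : e ⟨p.1, hpC⟩ = p := Subtype.ext rfl
      rw [this]; exact hpZ'
    · have : (⟨p.1, hpC⟩ : ↥C) ∈ e ⁻¹' Z'' := by
        show e ⟨p.1, hpC⟩ ∈ Z''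
        have : e ⟨p.1, hpC⟩ = p := Subtype.ext rfl
        rw [this]; exact hpZ''
      rw [hpre] at this
      exact this.1
  have hGCIP : HasCIP G := by
    intro s hs
    obtain ⟨y, hy⟩ := hCIP (fun n => e ⁻¹' s n) fun n => (hs n).2
    refine ⟨e y, ?_⟩
    simp only [mem_iInter] at hy ⊢
    exact fun n => hy n
  obtain ⟨p, hp⟩ := hP G hGultra hGCIP
  obtain ⟨Z_A, hZ_AG, hpreA, hmemCA⟩ := key A hAF subset_rfl
  have hpZA : p ∈ Z_A := hp Z_A hZ_AG
  have hpC : (p : X) ∈ C := hmemCA p hpZA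
  refine ⟨⟨p.1, hpC⟩, ?_⟩
  intro W hWF
  obtain ⟨Z'', hZ''G, hpre, -⟩ := key (W ∩ A) (hF.1.2.2.2.1 _ hWF _ hAF) inter_subset_right
  have : (⟨p.1, hpC⟩ : ↥C) ∈ e ⁻¹' Z'' := by
    show e ⟨p.1, hpC⟩ ∈ Z''
    have heq : e ⟨p.1, hpC⟩ = p := Subtype.ext rfl
    rw [heq]
    exact hp Z'' hZ''G
  rw [hpre] at this
  exact this.1


/-- H hard iff there is compact K ⊆ H such that for every open V ⊇ K
there are zero sets Z₁, Z₂ with X \ Z₂ realcompact and H \ V ⊆ Z₁ ⊆ X \ Z₂. -/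
theorem stmt4 [TopologicalSpace X] [T35Space X] (H : Set X) (hH : IsClosed H) :
    IsHard H ↔ ∃ K : Set X, K ⊆ H ∧ IsCompact K ∧ ∀ V : Set X, IsOpen V → K ⊆ V →
      ∃ Z₁ Z₂ : Set X, IsZeroSet Z₁ ∧ IsZeroSet Z₂ ∧ IsRealcompact ↥(Z₂ᶜ) ∧
        H \ V ⊆ Z₁ ∧ Z₁ ⊆ Z₂ᶜ := by
  constructor
  · rintro ⟨-, K, hK, hprop⟩
    refine ⟨K ∩ H, inter_subset_right, hK.inter_right hH, ?_⟩
    intro V hV hKV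
    have hV' : IsOpen (V ∪ Hᶜ) := hV.union hH.isOpen_compl
    have hKV' : K ⊆ V ∪ Hᶜ := by
      intro x hx
      by_cases hxH : x ∈ H
      · exact Or.inl (hKV ⟨hx, hxH⟩)
      · exact Or.inr hxH
    obtain ⟨P, hPrc, f, hf, hf0, hf1⟩ := hprop _ hV' hKV'
    have hHVeq : H \ (V ∪ Hᶜ) = H \ V := by
      ext x
      by_cases hx : x ∈ H <;> simp [hx, mem_diff]
    rw [hHVeq] at hf0
    refine ⟨{x | |f x| ≤ 1/3}, {x | 2/3 ≤ |f x|}, isZeroSet_le hf.abs _,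
      isZeroSet_ge hf.abs _, ?_, ?_, ?_⟩
    · have hCP : {x | (2:ℝ)/3 ≤ |f x|}ᶜ ⊆ P := by
        intro x hx
        by_contra hxP
        have : f x = 1 := hf1 x hxP
        apply hx
        simp only [mem_setOf_eq, this]
        norm_num
      refine cozero_realcompact hCP hPrc
        (h := fun x => max (2/3 - |f x|) 0)
        ((continuous_const.sub hf.abs).max continuous_const) ?_
      ext x
      simp only [mem_compl_iff, mem_setOf_eq, ne_eq, max_eq_right_iff, sub_nonpos, not_le]
    · intro x hx
      have : f x = 0 := hf0 x hx
      simp only [mem_setOf_eq, this]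
      norm_num
    · intro x hx
      simp only [mem_setOf_eq] at hx
      simp only [mem_compl_iff, mem_setOf_eq]
      intro hge
      linarith
  · rintro ⟨K, hKH, hK, hprop⟩
    refine ⟨hH, K, hK, ?_⟩
    intro V hV hKV
    obtain ⟨Z₁, Z₂, ⟨f₁, hf₁, hZ₁⟩, ⟨f₂, hf₂, hZ₂⟩, hrc, hHZ₁, hZ₁Z₂⟩ := hprop V hV hKV
    refine ⟨Z₂ᶜ, hrc, ?_⟩
    have hne : ∀ x, |f₁ x| + |f₂ x| ≠ 0 := by
      intro x hx
      have h1 : f₁ x = 0 := by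
        have := abs_nonneg (f₁ x); have := abs_nonneg (f₂ x)
        have : |f₁ x| = 0 := by linarith
        exact abs_eq_zero.mp this
      have h2 : f₂ x = 0 := by
        have := abs_nonneg (f₁ x); have := abs_nonneg (f₂ x)
        have : |f₂ x| = 0 := by linarith
        exact abs_eq_zero.mp this
      have hx1 : x ∈ Z₁ := by rw [hZ₁]; exact h1
      have hx2 : x ∈ Z₂ := by rw [hZ₂]; exact h2
      exact hZ₁Z₂ hx1 hx2
    refine ⟨fun x => |f₁ x| / (|f₁ x| + |f₂ x|), hf₁.abs.div (hf₁.abs.add hf₂.abs) hne,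
      ?_, ?_⟩
    · intro x hx
      have hx1 : x ∈ Z₁ := hHZ₁ hx
      rw [hZ₁] at hx1
      simp only [mem_setOf_eq] at hx1
      simp [hx1]
    · intro x hx
      rw [compl_compl] at hx
      have hx2 : f₂ x = 0 := by rw [hZ₂] at hx; exact hx
      have hx1 : f₁ x ≠ 0 := by
        intro h0
        have : x ∈ Z₁ := by rw [hZ₁]; exact h0
        exact hZ₁Z₂ this hx
      simp only [hx2, abs_zero, add_zero]
      exact div_self (abs_ne_zero.mpr hx1)
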